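/- Let (Y, p) be smooth on an open subset of ℝ × ℝ³, with Y ℝ³-valued and p scalar, satisfying the elastodynamic equation ∂_t²Y − ΔY = −∇p − (∇Y)^⊤(∂_t² − Δ)Y. Then for each i ∈ {1,2,3}: (∂_t² − Δ)(Ω̃ᵢY) = −(∇Ω̃ᵢY)^⊤(∂_t² − Δ)Y − (∇Y)^⊤(∂_t² − Δ)(Ω̃ᵢY) − ∇(Ωᵢ p). -/

import Mathlib

/-!
STATEMENT 18: Commutation of the elastodynamic equations with the modified
rotations Ω̃ᵢ (equation (2-2)): if ∂_t²Y − ΔY = −∇p − (∇Y)^⊤(∂_t² − Δ)Y on an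
open set, then
(∂_t² − Δ)(Ω̃ᵢY) = −(∇Ω̃ᵢY)^⊤(∂_t² − Δ)Y − (∇Y)^⊤(∂_t² − Δ)(Ω̃ᵢY) − ∇(Ωᵢ p).
-/

noncomputable section

namespace Stmt18

abbrev Pt : Type := EuclideanSpace ℝ (Fin 3)

/-- Scalar space-time functions. -/
abbrev STF : Type := ℝ → Pt → ℝ

/-- ℝ³-valued space-time functions. -/
abbrev STV : Type := ℝ → Pt → Fin 3 → ℝ

def pd (j : Fin 3) (f : Pt → ℝ) : Pt → ℝ :=
  fun x => fderiv ℝ f x (EuclideanSpace.single j 1)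

/-- Time derivative ∂_t. -/
def Dt (f : STF) : STF := fun t x => deriv (fun s => f s x) t

/-- Spatial derivative ∂_j. -/
def Dsp (j : Fin 3) (f : STF) : STF := fun t x => pd j (f t) x

/-- All space-time first derivatives ∂ = (∂_t, ∂₁, ∂₂, ∂₃). -/
def Dst : Fin 4 → STF → STF := ![Dt, Dsp 0, Dsp 1, Dsp 2]

/-- The wave operator ∂_t² − Δ. -/
def Box (f : STF) : STF := fun t x => Dt (Dt f) t x - ∑ j, Dsp j (Dsp j f) t x

/-- The rotation operators Ω = y ∧ ∇ : Ωᵢ = y_{i+1}∂_{i+2} − y_{i+2}∂_{i+1} (cyclic). -/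
def Om (i : Fin 3) (f : STF) : STF :=
  fun t x => x (i+1) * Dsp (i+2) f t x - x (i+2) * Dsp (i+1) f t x

/-- The scaling operator S = t∂_t + r∂_r = t∂_t + Σ_j y_j ∂_j. -/
def Sc (f : STF) : STF := fun t x => t * Dt f t x + ∑ j, x j * Dsp j f t x

/-- The matrices U₁, U₂, U₃. -/
def Umat : Fin 3 → Matrix (Fin 3) (Fin 3) ℝ :=
  ![!![0,0,0; 0,0,1; 0,-1,0], !![0,0,-1; 0,0,0; 1,0,0], !![0,1,0; -1,0,0; 0,0,0]]

/-- Componentwise application of a scalar operator to a vector field. -/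
def mapc (T : STF → STF) (Y : STV) : STV := fun t x i => T (fun s y => Y s y i) t x

/-- The modified rotations Ω̃ᵢY = ΩᵢY + UᵢY. -/
def OmT (i : Fin 3) (Y : STV) : STV :=
  fun t x j => Om i (fun s y => Y s y j) t x + ∑ k, Umat i j k * Y t x k

/-- The modified scaling S̃Y = (S − 1)Y. -/
def ScT (Y : STV) : STV := fun t x j => Sc (fun s y => Y s y j) t x - Y t x j

/-- The seven generators {∂_t, ∂₁, ∂₂, Ω̃₁, Ω̃₂, Ω̃₃, S̃} acting on vector fields. -/
def Gen : Fin 7 → STV → STV :=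
  ![mapc Dt, mapc (Dsp 0), mapc (Dsp 1), OmT 0, OmT 1, OmT 2, ScT]

/-!
Lift every function of `(t, y)` to a function on space-time `ℝ × ℝ³`, where `∂_t` and `∂_j` are
derivatives along constant vector fields and `Ωᵢ` is the derivative along the linear rotation
field `Lᵢ`. For a linear field `L` one has `[∂_v, L·∇] = ∂_{L v}`. Hence `Ωᵢ` commutes with
`∂_t² − Δ`: the correction terms pair the symmetric Hessian with the antisymmetric `Lᵢ`, and `Lᵢ`
kills the time direction. The same identity gives `[∂_j, Ωᵢ] = Σ_l (Uᵢ)_{jl} ∂_l`, so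
`Ω̃ᵢ ∇p = ∇(Ωᵢ p)` and, since `Uᵢ` is antisymmetric,
`Ω̃ᵢ((∇Y)ᵀ W) = (∇Ω̃ᵢY)ᵀ W + (∇Y)ᵀ Ω̃ᵢW`. Applying `Ω̃ᵢ` to the equation with `W = (∂_t² − Δ)Y`
gives the claim.
-/

open scoped ContDiff Topology Matrix
open Set

section DirDeriv

variable {E : Type*} [NormedAddCommGroup E] [NormedSpace ℝ E]
  {U : Set E} {F G : E → ℝ} {x : E}

def dirDeriv (v : E) (F : E → ℝ) : E → ℝ := fun x => fderiv ℝ F x v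

def derivAlong (L : E →L[ℝ] E) (F : E → ℝ) : E → ℝ := fun x => fderiv ℝ F x (L x)

lemma derivAlong_eq_dirDeriv (L : E →L[ℝ] E) : derivAlong L F x = dirDeriv (L x) F x := rfl

lemma differentiableAt_of_contDiffOn {E' : Type*} [NormedAddCommGroup E'] [NormedSpace ℝ E']
    {f : E → E'} (hU : IsOpen U) (hf : ContDiffOn ℝ ∞ f U) (hx : x ∈ U) :
    DifferentiableAt ℝ f x :=
  (hf.contDiffAt (hU.mem_nhds hx)).differentiableAt (by simp)

lemma contDiffOn_dirDeriv (hU : IsOpen U) (hF : ContDiffOn ℝ ∞ F U) (v : E) :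
    ContDiffOn ℝ ∞ (dirDeriv v F) U :=
  (hF.fderiv_of_isOpen hU le_rfl).clm_apply contDiffOn_const

lemma contDiffOn_derivAlong (hU : IsOpen U) (hF : ContDiffOn ℝ ∞ F U) (L : E →L[ℝ] E) :
    ContDiffOn ℝ ∞ (derivAlong L F) U :=
  (hF.fderiv_of_isOpen hU le_rfl).clm_apply L.contDiff.contDiffOn

lemma dirDeriv_congr (hU : IsOpen U) (h : EqOn F G U) (hx : x ∈ U) (v : E) :
    dirDeriv v F x = dirDeriv v G x := by
  rw [dirDeriv, dirDeriv, (Filter.eventuallyEq_of_mem (hU.mem_nhds hx) h).fderiv_eq]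

lemma derivAlong_congr (hU : IsOpen U) (h : EqOn F G U) (hx : x ∈ U) (L : E →L[ℝ] E) :
    derivAlong L F x = derivAlong L G x :=
  dirDeriv_congr hU h hx (L x)

lemma dirDeriv_dirDeriv (hU : IsOpen U) (hF : ContDiffOn ℝ ∞ F U) (hx : x ∈ U) (v w : E) :
    dirDeriv w (dirDeriv v F) x = fderiv ℝ (fderiv ℝ F) x w v := by
  have hd := differentiableAt_of_contDiffOn hU (hF.fderiv_of_isOpen hU le_rfl) hx
  have h := fderiv_clm_apply (u := fun _ => v) hd (differentiableAt_const v)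
  unfold dirDeriv
  rw [h]
  simp

lemma isSymmSndFDerivAt_of_contDiffOn (hU : IsOpen U) (hF : ContDiffOn ℝ ∞ F U) (hx : x ∈ U) :
    IsSymmSndFDerivAt ℝ F x :=
  (hF.contDiffAt (hU.mem_nhds hx)).isSymmSndFDerivAt (by simp [ENat.LEInfty.out])

lemma dirDeriv_comm (hU : IsOpen U) (hF : ContDiffOn ℝ ∞ F U) (hx : x ∈ U) (v w : E) :
    dirDeriv w (dirDeriv v F) x = dirDeriv v (dirDeriv w F) x := by
  rw [dirDeriv_dirDeriv hU hF hx, dirDeriv_dirDeriv hU hF hx,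
    isSymmSndFDerivAt_of_contDiffOn hU hF hx]

lemma dirDeriv_derivAlong (hU : IsOpen U) (hF : ContDiffOn ℝ ∞ F U) (hx : x ∈ U)
    (L : E →L[ℝ] E) (v : E) :
    dirDeriv v (derivAlong L F) x = derivAlong L (dirDeriv v F) x + dirDeriv (L v) F x := by
  have hd := differentiableAt_of_contDiffOn hU (hF.fderiv_of_isOpen hU le_rfl) hx
  rw [derivAlong_eq_dirDeriv, dirDeriv_dirDeriv hU hF hx, isSymmSndFDerivAt_of_contDiffOn hU hF hx]
  have h := fderiv_clm_apply (u := L) hd L.differentiableAt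
  unfold dirDeriv derivAlong
  rw [h]
  simp [add_comm]

lemma dirDeriv_add (hF : DifferentiableAt ℝ F x) (hG : DifferentiableAt ℝ G x) (v : E) :
    dirDeriv v (fun y => F y + G y) x = dirDeriv v F x + dirDeriv v G x := by
  simp [dirDeriv, fderiv_fun_add hF hG]

lemma dirDeriv_sub (hF : DifferentiableAt ℝ F x) (hG : DifferentiableAt ℝ G x) (v : E) :
    dirDeriv v (fun y => F y - G y) x = dirDeriv v F x - dirDeriv v G x := by
  simp [dirDeriv, fderiv_fun_sub hF hG]

lemma dirDeriv_neg (v : E) : dirDeriv v (fun y => -F y) x = -dirDeriv v F x := by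
  simp [dirDeriv, fderiv_fun_neg]

lemma dirDeriv_const_mul (hF : DifferentiableAt ℝ F x) (c : ℝ) (v : E) :
    dirDeriv v (fun y => c * F y) x = c * dirDeriv v F x := by
  simp [dirDeriv, fderiv_const_mul hF c]

lemma dirDeriv_mul (hF : DifferentiableAt ℝ F x) (hG : DifferentiableAt ℝ G x) (v : E) :
    dirDeriv v (fun y => F y * G y) x = F x * dirDeriv v G x + G x * dirDeriv v F x := by
  simp [dirDeriv, fderiv_fun_mul hF hG]

lemma dirDeriv_sum {ι : Type*} (s : Finset ι) {F : ι → E → ℝ}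
    (hF : ∀ k ∈ s, DifferentiableAt ℝ (F k) x) (v : E) :
    dirDeriv v (fun y => ∑ k ∈ s, F k y) x = ∑ k ∈ s, dirDeriv v (F k) x := by
  simp [dirDeriv, fderiv_fun_sum hF]

lemma dirDeriv_dirDeriv_derivAlong (hU : IsOpen U) (hF : ContDiffOn ℝ ∞ F U) (hx : x ∈ U)
    (L : E →L[ℝ] E) (w : E) :
    dirDeriv w (dirDeriv w (derivAlong L F)) x
      = derivAlong L (dirDeriv w (dirDeriv w F)) x + 2 * fderiv ℝ (fderiv ℝ F) x w (L w) := by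
  have hwF := contDiffOn_dirDeriv hU hF w
  have hcomm : EqOn (dirDeriv w (derivAlong L F))
      (fun y => derivAlong L (dirDeriv w F) y + dirDeriv (L w) F y) U :=
    fun y hy => dirDeriv_derivAlong hU hF hy L w
  rw [dirDeriv_congr hU hcomm hx,
    dirDeriv_add (differentiableAt_of_contDiffOn hU (contDiffOn_derivAlong hU hwF L) hx)
      (differentiableAt_of_contDiffOn hU (contDiffOn_dirDeriv hU hF _) hx),
    dirDeriv_derivAlong hU hwF hx, dirDeriv_comm hU hF hx w (L w), dirDeriv_dirDeriv hU hF hx]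
  ring

lemma dirDeriv_dirDeriv_add (hU : IsOpen U) (hF : ContDiffOn ℝ ∞ F U) (hG : ContDiffOn ℝ ∞ G U)
    (hx : x ∈ U) (v w : E) :
    dirDeriv w (dirDeriv v (fun y => F y + G y)) x
      = dirDeriv w (dirDeriv v F) x + dirDeriv w (dirDeriv v G) x := by
  rw [dirDeriv_congr hU (fun y hy => dirDeriv_add (differentiableAt_of_contDiffOn hU hF hy)
      (differentiableAt_of_contDiffOn hU hG hy) v) hx,
    dirDeriv_add (differentiableAt_of_contDiffOn hU (contDiffOn_dirDeriv hU hF v) hx)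
      (differentiableAt_of_contDiffOn hU (contDiffOn_dirDeriv hU hG v) hx)]

lemma dirDeriv_dirDeriv_const_mul (hU : IsOpen U) (hF : ContDiffOn ℝ ∞ F U) (hx : x ∈ U)
    (c : ℝ) (v w : E) :
    dirDeriv w (dirDeriv v (fun y => c * F y)) x = c * dirDeriv w (dirDeriv v F) x := by
  rw [dirDeriv_congr hU
      (fun y hy => dirDeriv_const_mul (differentiableAt_of_contDiffOn hU hF hy) c v) hx,
    dirDeriv_const_mul (differentiableAt_of_contDiffOn hU (contDiffOn_dirDeriv hU hF v) hx)]

lemma dirDeriv_dirDeriv_sum {ι : Type*} (hU : IsOpen U) (s : Finset ι) {F : ι → E → ℝ}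
    (hF : ∀ k ∈ s, ContDiffOn ℝ ∞ (F k) U) (hx : x ∈ U) (v w : E) :
    dirDeriv w (dirDeriv v (fun y => ∑ k ∈ s, F k y)) x
      = ∑ k ∈ s, dirDeriv w (dirDeriv v (F k)) x := by
  rw [dirDeriv_congr hU (fun y hy => dirDeriv_sum s
      (fun k hk => differentiableAt_of_contDiffOn hU (hF k hk) hy) v) hx,
    dirDeriv_sum s
      (fun k hk => differentiableAt_of_contDiffOn hU (contDiffOn_dirDeriv hU (hF k hk) v) hx)]

end DirDeriv

section SpaceTime

variable {n : ℕ} {U : Set (ℝ × EuclideanSpace ℝ (Fin n))}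
  {F G : ℝ × EuclideanSpace ℝ (Fin n) → ℝ} {q : ℝ × EuclideanSpace ℝ (Fin n)}

def timeDir : ℝ × EuclideanSpace ℝ (Fin n) := (1, 0)

def spaceDir (j : Fin n) : ℝ × EuclideanSpace ℝ (Fin n) := (0, EuclideanSpace.single j 1)

def spaceCoord (a : Fin n) : (ℝ × EuclideanSpace ℝ (Fin n)) →L[ℝ] ℝ :=
  (EuclideanSpace.proj a).comp (ContinuousLinearMap.snd ℝ ℝ _)

def rotField (a b : Fin n) :
    (ℝ × EuclideanSpace ℝ (Fin n)) →L[ℝ] ℝ × EuclideanSpace ℝ (Fin n) :=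
  (spaceCoord a).smulRight (spaceDir b) - (spaceCoord b).smulRight (spaceDir a)

def wave (F : ℝ × EuclideanSpace ℝ (Fin n) → ℝ) : ℝ × EuclideanSpace ℝ (Fin n) → ℝ := fun q =>
  dirDeriv timeDir (dirDeriv timeDir F) q - ∑ j, dirDeriv (spaceDir j) (dirDeriv (spaceDir j) F) q

lemma rotField_apply (a b : Fin n) (q : ℝ × EuclideanSpace ℝ (Fin n)) :
    rotField a b q = q.2 a • spaceDir b - q.2 b • spaceDir a := rfl

lemma rotField_timeDir (a b : Fin n) : rotField a b timeDir = 0 := by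
  simp [rotField_apply, timeDir]

lemma sum_rotField_spaceDir_of_symm (B : (ℝ × EuclideanSpace ℝ (Fin n)) →L[ℝ]
    (ℝ × EuclideanSpace ℝ (Fin n)) →L[ℝ] ℝ) (hB : ∀ v w, B v w = B w v) (a b : Fin n) :
    ∑ j, B (spaceDir j) (rotField a b (spaceDir j)) = 0 := by
  have hcoord : ∀ j c : Fin n, (spaceDir j).2 c = if c = j then 1 else 0 := fun j c =>
    PiLp.single_apply _ _ _ _ _
  simp only [rotField_apply, map_sub, map_smul, smul_eq_mul, hcoord, boole_mul,
    Finset.sum_sub_distrib, Finset.sum_ite_eq, Finset.mem_univ, if_true]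
  rw [hB, sub_self]

lemma contDiffOn_wave (hU : IsOpen U) (hF : ContDiffOn ℝ ∞ F U) : ContDiffOn ℝ ∞ (wave F) U :=
  (contDiffOn_dirDeriv hU (contDiffOn_dirDeriv hU hF _) _).sub
    (ContDiffOn.sum fun _ _ => contDiffOn_dirDeriv hU (contDiffOn_dirDeriv hU hF _) _)

lemma wave_add (hU : IsOpen U) (hF : ContDiffOn ℝ ∞ F U) (hG : ContDiffOn ℝ ∞ G U)
    (hq : q ∈ U) :
    wave (fun y => F y + G y) q = wave F q + wave G q := by
  simp only [wave, dirDeriv_dirDeriv_add hU hF hG hq, Finset.sum_add_distrib]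
  ring

lemma wave_const_mul (hU : IsOpen U) (hF : ContDiffOn ℝ ∞ F U) (hq : q ∈ U) (c : ℝ) :
    wave (fun y => c * F y) q = c * wave F q := by
  simp only [wave, dirDeriv_dirDeriv_const_mul hU hF hq, ← Finset.mul_sum]
  ring

lemma wave_sum {ι : Type*} (hU : IsOpen U) (s : Finset ι)
    {F : ι → ℝ × EuclideanSpace ℝ (Fin n) → ℝ} (hF : ∀ k ∈ s, ContDiffOn ℝ ∞ (F k) U) (hq : q ∈ U) :
    wave (fun y => ∑ k ∈ s, F k y) q = ∑ k ∈ s, wave (F k) q := by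
  simp only [wave, dirDeriv_dirDeriv_sum hU s hF hq, Finset.sum_sub_distrib]
  rw [Finset.sum_comm]

lemma derivAlong_rotField (a b : Fin n) :
    derivAlong (rotField a b) F q
      = q.2 a * dirDeriv (spaceDir b) F q - q.2 b * dirDeriv (spaceDir a) F q := by
  simp [derivAlong, rotField_apply, dirDeriv]

lemma wave_derivAlong_rotField (hU : IsOpen U) (hF : ContDiffOn ℝ ∞ F U) (hq : q ∈ U)
    (a b : Fin n) :
    wave (derivAlong (rotField a b) F) q = derivAlong (rotField a b) (wave F) q := by
  have hdiff : ∀ v w, DifferentiableAt ℝ (dirDeriv w (dirDeriv v F)) q := fun v w =>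
    differentiableAt_of_contDiffOn hU (contDiffOn_dirDeriv hU (contDiffOn_dirDeriv hU hF v) w) hq
  conv_rhs => rw [derivAlong_eq_dirDeriv]; unfold wave; rw [
    dirDeriv_sub (hdiff _ _) (DifferentiableAt.fun_sum fun j _ => hdiff _ _),
    dirDeriv_sum _ (fun j _ => hdiff _ _)]
  simp only [wave, dirDeriv_dirDeriv_derivAlong hU hF hq, rotField_timeDir, map_zero,
    Finset.sum_add_distrib, ← Finset.mul_sum,
    sum_rotField_spaceDir_of_symm _ (isSymmSndFDerivAt_of_contDiffOn hU hF hq)]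
  simp [derivAlong_eq_dirDeriv]

end SpaceTime

lemma Matrix.dotProduct_mulVec_add_of_transpose_eq_neg {ι R : Type*} [Fintype ι] [CommRing R]
    {M : Matrix ι ι R} (hM : Mᵀ = -M) (a b : ι → R) :
    a ⬝ᵥ (M *ᵥ b) + b ⬝ᵥ (M *ᵥ a) = 0 := by
  rw [Matrix.dotProduct_mulVec b, ← Matrix.mulVec_transpose, hM, Matrix.neg_mulVec,
    neg_dotProduct, dotProduct_comm, add_neg_cancel]

section Rotations

variable {U : Set (ℝ × Pt)} {F G : Fin 3 → ℝ × Pt → ℝ} {P : ℝ × Pt → ℝ} {q : ℝ × Pt}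

lemma Umat_transpose (i : Fin 3) : (Umat i)ᵀ = -Umat i := by
  fin_cases i <;> ext j k <;> fin_cases j <;> fin_cases k <;> simp [Umat]

lemma rotField_spaceDir (i j : Fin 3) :
    rotField (i + 1) (i + 2) (spaceDir j : ℝ × Pt) = ∑ l, Umat i j l • spaceDir l := by
  fin_cases i <;> fin_cases j <;>
    simp [rotField_apply, Umat, Fin.sum_univ_three, spaceDir, Prod.mk_zero_zero]

lemma dirDeriv_rotField_spaceDir (i j : Fin 3) (P : ℝ × Pt → ℝ) (q : ℝ × Pt) :
    dirDeriv (rotField (i + 1) (i + 2) (spaceDir j)) P q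
      = ∑ l, Umat i j l * dirDeriv (spaceDir l) P q := by
  simp [rotField_spaceDir, dirDeriv]

def modRot (i : Fin 3) (F : Fin 3 → ℝ × Pt → ℝ) (j : Fin 3) : ℝ × Pt → ℝ :=
  fun q => derivAlong (rotField (i + 1) (i + 2)) (F j) q + ∑ k, Umat i j k * F k q

lemma contDiffOn_modRot (hU : IsOpen U) (hF : ∀ k, ContDiffOn ℝ ∞ (F k) U) (i j : Fin 3) :
    ContDiffOn ℝ ∞ (modRot i F j) U :=
  (contDiffOn_derivAlong hU (hF j) _).add (ContDiffOn.sum fun k _ => contDiffOn_const.mul (hF k))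

lemma modRot_congr (hU : IsOpen U) (h : ∀ k, EqOn (F k) (G k) U) (hq : q ∈ U) (i j : Fin 3) :
    modRot i F j q = modRot i G j q := by
  simp only [modRot, derivAlong_congr hU (h j) hq, fun k => h k hq]

lemma modRot_sub (hF : ∀ k, DifferentiableAt ℝ (F k) q) (hG : ∀ k, DifferentiableAt ℝ (G k) q)
    (i j : Fin 3) : modRot i (fun k y => F k y - G k y) j q = modRot i F j q - modRot i G j q := by
  simp only [modRot, derivAlong_eq_dirDeriv, dirDeriv_sub (hF j) (hG j), mul_sub,
    Finset.sum_sub_distrib]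
  ring

lemma modRot_neg (i j : Fin 3) : modRot i (fun k y => -F k y) j q = -modRot i F j q := by
  simp only [modRot, derivAlong_eq_dirDeriv, dirDeriv_neg, mul_neg, Finset.sum_neg_distrib]
  ring

lemma wave_modRot (hU : IsOpen U) (hF : ∀ k, ContDiffOn ℝ ∞ (F k) U) (hq : q ∈ U) (i j : Fin 3) :
    wave (modRot i F j) q = modRot i (fun k => wave (F k)) j q := by
  unfold modRot
  rw [wave_add hU (contDiffOn_derivAlong hU (hF j) _)
      (ContDiffOn.sum fun k _ => contDiffOn_const.mul (hF k)) hq,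
    wave_derivAlong_rotField hU (hF j) hq,
    wave_sum hU _ (fun k _ => contDiffOn_const.mul (hF k)) hq]
  simp only [wave_const_mul hU (hF _) hq]

lemma modRot_grad (hU : IsOpen U) (hP : ContDiffOn ℝ ∞ P U) (hq : q ∈ U) (i j : Fin 3) :
    modRot i (fun k => dirDeriv (spaceDir k) P) j q
      = dirDeriv (spaceDir j) (derivAlong (rotField (i + 1) (i + 2)) P) q := by
  rw [dirDeriv_derivAlong hU hP hq, dirDeriv_rotField_spaceDir]
  rfl

lemma dirDeriv_modRot (hU : IsOpen U) (hF : ∀ k, ContDiffOn ℝ ∞ (F k) U) (hq : q ∈ U)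
    (i j k : Fin 3) :
    dirDeriv (spaceDir j) (modRot i F k) q
      = modRot i (fun m => dirDeriv (spaceDir j) (F m)) k q
        + ∑ l, Umat i j l * dirDeriv (spaceDir l) (F k) q := by
  have hdF : ∀ m, DifferentiableAt ℝ (F m) q := fun m =>
    differentiableAt_of_contDiffOn hU (hF m) hq
  unfold modRot
  rw [dirDeriv_add
      (differentiableAt_of_contDiffOn hU (contDiffOn_derivAlong hU (hF k) _) hq)
      (DifferentiableAt.fun_sum fun m _ => (hdF m).const_mul _),
    dirDeriv_derivAlong hU (hF k) hq, dirDeriv_rotField_spaceDir,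
    dirDeriv_sum _ fun m _ => (hdF m).const_mul _]
  simp only [dirDeriv_const_mul (hdF _)]
  ring

lemma modRot_gradT_mul (hU : IsOpen U) (hF : ∀ k, ContDiffOn ℝ ∞ (F k) U)
    {W : Fin 3 → ℝ × Pt → ℝ} (hW : ∀ k, DifferentiableAt ℝ (W k) q) (hq : q ∈ U)
    (i j : Fin 3) :
    modRot i (fun k y => ∑ m, dirDeriv (spaceDir k) (F m) y * W m y) j q
      = ∑ m, (dirDeriv (spaceDir j) (modRot i F m) q * W m q
        + dirDeriv (spaceDir j) (F m) q * modRot i W m q) := by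
  have hdF : ∀ k m, DifferentiableAt ℝ (dirDeriv (spaceDir k) (F m)) q := fun k m =>
    differentiableAt_of_contDiffOn hU (contDiffOn_dirDeriv hU (hF m) _) hq
  have hskew := Matrix.dotProduct_mulVec_add_of_transpose_eq_neg (Umat_transpose i)
    (fun m => dirDeriv (spaceDir j) (F m) q) (fun m => W m q)
  simp only [dirDeriv_modRot hU hF hq, modRot]
  rw [derivAlong_eq_dirDeriv,
    dirDeriv_sum (F := fun m y => dirDeriv (spaceDir j) (F m) y * W m y) _
      fun m _ => (hdF j m).mul (hW m)]
  simp only [dirDeriv_mul (hdF _ _) (hW _), ← derivAlong_eq_dirDeriv]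
  simp only [dotProduct, Matrix.mulVec, Fin.sum_univ_three] at hskew ⊢
  linear_combination -hskew

theorem wave_modRot_of_elastodynamic (hU : IsOpen U) (hF : ∀ k, ContDiffOn ℝ ∞ (F k) U)
    (hP : ContDiffOn ℝ ∞ P U)
    (heq : ∀ q ∈ U, ∀ j, wave (F j) q
      = -dirDeriv (spaceDir j) P q - ∑ k, dirDeriv (spaceDir j) (F k) q * wave (F k) q)
    (hq : q ∈ U) (i j : Fin 3) :
    wave (modRot i F j) q
      = -(∑ k, dirDeriv (spaceDir j) (modRot i F k) q * wave (F k) q)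
        - (∑ k, dirDeriv (spaceDir j) (F k) q * wave (modRot i F k) q)
        - dirDeriv (spaceDir j) (derivAlong (rotField (i + 1) (i + 2)) P) q := by
  have hW : ∀ k, DifferentiableAt ℝ (wave (F k)) q := fun k =>
    differentiableAt_of_contDiffOn hU (contDiffOn_wave hU (hF k)) hq
  have hdP : ∀ k, DifferentiableAt ℝ (dirDeriv (spaceDir k) P) q := fun k =>
    differentiableAt_of_contDiffOn hU (contDiffOn_dirDeriv hU hP _) hq
  have hdF : ∀ k m, DifferentiableAt ℝ (dirDeriv (spaceDir k) (F m)) q := fun k m =>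
    differentiableAt_of_contDiffOn hU (contDiffOn_dirDeriv hU (hF m) _) hq
  rw [wave_modRot hU hF hq, modRot_congr hU (fun k y hy => heq y hy k) hq,
    modRot_sub (F := fun k y => -dirDeriv (spaceDir k) P y)
      (G := fun k y => ∑ m, dirDeriv (spaceDir k) (F m) y * wave (F m) y) (fun k => (hdP k).neg)
      (fun k => DifferentiableAt.fun_sum fun m _ => (hdF k m).mul (hW m)),
    modRot_neg, modRot_grad hU hP hq, modRot_gradT_mul hU hF hW hq]
  simp only [← wave_modRot hU hF hq, Finset.sum_add_distrib]
  ring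

end Rotations

section Transfer

variable {U : Set (ℝ × Pt)} {f : STF} {F : ℝ × Pt → ℝ} {q : ℝ × Pt}

lemma Dt_eq_dirDeriv (hU : IsOpen U) (hF : ContDiffOn ℝ ∞ F U)
    (h : EqOn (Function.uncurry f) F U) (hq : q ∈ U) : Dt f q.1 q.2 = dirDeriv timeDir F q := by
  obtain ⟨t, x⟩ := q
  have hloc : (fun s => f s x) =ᶠ[𝓝 t] fun s => F (s, x) :=
    Filter.eventually_of_mem
      ((continuous_id.prodMk continuous_const).continuousAt.preimage_mem_nhds (hU.mem_nhds hq))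
      fun _ hs => h hs
  have hd : HasDerivAt (fun s => F (s, x)) (dirDeriv timeDir F (t, x)) t :=
    (differentiableAt_of_contDiffOn hU hF hq).hasFDerivAt.comp_hasDerivAt t
      ((hasDerivAt_id t).prodMk (hasDerivAt_const t x))
  exact hloc.deriv_eq.trans hd.deriv

lemma Dsp_eq_dirDeriv (hU : IsOpen U) (hF : ContDiffOn ℝ ∞ F U)
    (h : EqOn (Function.uncurry f) F U) (hq : q ∈ U) (j : Fin 3) :
    Dsp j f q.1 q.2 = dirDeriv (spaceDir j) F q := by
  obtain ⟨t, x⟩ := q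
  have hloc : f t =ᶠ[𝓝 x] fun y => F (t, y) :=
    Filter.eventually_of_mem
      ((continuous_const.prodMk continuous_id).continuousAt.preimage_mem_nhds (hU.mem_nhds hq))
      fun _ hy => h hy
  have hd : HasFDerivAt (fun y => F (t, y))
      ((fderiv ℝ F (t, x)).comp ((0 : Pt →L[ℝ] ℝ).prod (.id ℝ Pt))) x :=
    (differentiableAt_of_contDiffOn hU hF hq).hasFDerivAt.comp x
      ((hasFDerivAt_const t x).prodMk (hasFDerivAt_id x))
  simp only [Dsp, pd, hloc.fderiv_eq, hd.fderiv]
  rfl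

lemma Box_eq_wave (hU : IsOpen U) (hF : ContDiffOn ℝ ∞ F U)
    (h : EqOn (Function.uncurry f) F U) (hq : q ∈ U) : Box f q.1 q.2 = wave F q := by
  have hDt : EqOn (Function.uncurry (Dt f)) (dirDeriv timeDir F) U := fun y hy =>
    Dt_eq_dirDeriv hU hF h hy
  have hDsp : ∀ j, EqOn (Function.uncurry (Dsp j f)) (dirDeriv (spaceDir j) F) U :=
    fun j y hy => Dsp_eq_dirDeriv hU hF h hy j
  simp only [Box, wave, Dt_eq_dirDeriv hU (contDiffOn_dirDeriv hU hF _) hDt hq,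
    fun j => Dsp_eq_dirDeriv hU (contDiffOn_dirDeriv hU hF _) (hDsp j) hq j]

lemma Om_eq_derivAlong (hU : IsOpen U) (hF : ContDiffOn ℝ ∞ F U)
    (h : EqOn (Function.uncurry f) F U) (hq : q ∈ U) (i : Fin 3) :
    Om i f q.1 q.2 = derivAlong (rotField (i + 1) (i + 2)) F q := by
  rw [derivAlong_rotField, Om, Dsp_eq_dirDeriv hU hF h hq, Dsp_eq_dirDeriv hU hF h hq]

lemma OmT_eq_modRot {Y : STV} {F : Fin 3 → ℝ × Pt → ℝ} (hU : IsOpen U)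
    (hF : ∀ k, ContDiffOn ℝ ∞ (F k) U)
    (h : ∀ k, EqOn (Function.uncurry fun s y => Y s y k) (F k) U) (hq : q ∈ U) (i k : Fin 3) :
    OmT i Y q.1 q.2 k = modRot i F k q := by
  simp only [OmT, modRot, Om_eq_derivAlong hU (hF k) (h k) hq]
  congr 1
  exact Finset.sum_congr rfl fun m _ => congrArg _ (h m hq)

end Transfer

theorem rotation_commutation
    (Uset : Set (ℝ × Pt)) (hU : IsOpen Uset)
    (Y : STV) (p : STF)
    (hY : ∀ i, ContDiffOn ℝ (⊤ : ℕ∞) (fun q : ℝ × Pt => Y q.1 q.2 i) Uset)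
    (hp : ContDiffOn ℝ (⊤ : ℕ∞) (fun q : ℝ × Pt => p q.1 q.2) Uset)
    (heq : ∀ q ∈ Uset, ∀ i : Fin 3,
      Box (fun s y => Y s y i) q.1 q.2 =
        - Dsp i p q.1 q.2
          - ∑ k, Dsp i (fun s y => Y s y k) q.1 q.2 * Box (fun s y => Y s y k) q.1 q.2) :
    ∀ q ∈ Uset, ∀ (i j : Fin 3),
      Box (fun s y => OmT i Y s y j) q.1 q.2 =
        - (∑ k, Dsp j (fun s y => OmT i Y s y k) q.1 q.2
              * Box (fun s y => Y s y k) q.1 q.2)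
          - (∑ k, Dsp j (fun s y => Y s y k) q.1 q.2
              * Box (fun s y => OmT i Y s y k) q.1 q.2)
          - Dsp j (Om i p) q.1 q.2 := by
  intro q hq i j
  set F : Fin 3 → ℝ × Pt → ℝ := fun k q => Y q.1 q.2 k
  set P : ℝ × Pt → ℝ := fun q => p q.1 q.2
  have hlift : ∀ k, EqOn (Function.uncurry fun s y => Y s y k) (F k) Uset := fun _ _ _ => rfl
  have hOmT : ∀ k, EqOn (Function.uncurry fun s y => OmT i Y s y k) (modRot i F k) Uset :=
    fun k _ hy => OmT_eq_modRot hU hY hlift hy i k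
  have hOmp : EqOn (Function.uncurry (Om i p)) (derivAlong (rotField (i + 1) (i + 2)) P) Uset :=
    fun _ hy => Om_eq_derivAlong hU hp (fun _ _ => rfl) hy i
  have heqF : ∀ y ∈ Uset, ∀ j, wave (F j) y
      = -dirDeriv (spaceDir j) P y - ∑ k, dirDeriv (spaceDir j) (F k) y * wave (F k) y := by
    intro y hy j
    simpa only [Box_eq_wave hU (hY _) (hlift _) hy, Dsp_eq_dirDeriv hU (hY _) (hlift _) hy,
      Dsp_eq_dirDeriv hU hp (fun _ _ => rfl) hy] using heq y hy j
  have hmodRot := contDiffOn_modRot hU hY i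
  simp only [Box_eq_wave hU (hY _) (hlift _) hq, Dsp_eq_dirDeriv hU (hY _) (hlift _) hq,
    Box_eq_wave hU (hmodRot _) (hOmT _) hq, Dsp_eq_dirDeriv hU (hmodRot _) (hOmT _) hq,
    Dsp_eq_dirDeriv hU (contDiffOn_derivAlong hU hp _) hOmp hq]
  exact wave_modRot_of_elastodynamic hU hY hp heqF hq i j

end Stmt18
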